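/- Let U ⊆ ℝ³ be open and ω ∈ ℂ. Let E⁺, B⁺, K⁺ : U → ℂ³ with E⁺ continuously differentiable and B⁺, K⁺ continuous on U, satisfying curl E⁺ = iωB⁺ + K⁺ on U ∩ {x₃ > 0}; let E⁻, B⁻, K⁻ : U → ℂ³ with E⁻ continuously differentiable and B⁻, K⁻ continuous on U, satisfying curl E⁻ = iωB⁻ + K⁻ on U ∩ {x₃ < 0}. Then at every point x₀ = (y₀, 0) ∈ U ∩ {x₃ = 0}, (K⁺₃ − K⁻₃)(x₀) + iω(B⁺₃ − B⁻₃)(x₀) = ∂₁g₂(y₀) − ∂₂g₁(y₀), where g(y) = (E⁺₁(y,0) − E⁻₁(y,0), E⁺₂(y,0) − E⁻₂(y,0)) is the jump across the plane of the first two components of E. (Flat-interface classical form of the compatibility relation K_ν^Γ + iωB_ν^Γ = −div_τ E_τ^Γ of Theorem 4.3: the jumps of the normal components of K and B across the interface are determined by the jump of the tangential components of E.) -/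

import Mathlib

open Complex Set

/-- Partial derivative `∂ᵢ` of a scalar function on `ℝ³`. -/
noncomputable def pd3 (i : Fin 3) (f : (Fin 3 → ℝ) → ℂ) (x : Fin 3 → ℝ) : ℂ :=
  fderiv ℝ f x (Pi.single i 1)

/-- Partial derivative `∂ᵢ` of a scalar function on `ℝ²`. -/
noncomputable def pd2 (i : Fin 2) (f : (Fin 2 → ℝ) → ℂ) (y : Fin 2 → ℝ) : ℂ :=
  fderiv ℝ f y (Pi.single i 1)

/-- The curl of a vector field `F : ℝ³ → ℂ³`. -/
noncomputable def vcurl (F : (Fin 3 → ℝ) → Fin 3 → ℂ) (x : Fin 3 → ℝ) : Fin 3 → ℂ :=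
  ![pd3 1 (fun y => F y 2) x - pd3 2 (fun y => F y 1) x,
    pd3 2 (fun y => F y 0) x - pd3 0 (fun y => F y 2) x,
    pd3 0 (fun y => F y 1) x - pd3 1 (fun y => F y 0) x]

/-- Embedding of the plane `{x₃ = 0}` into `ℝ³`. -/
def emb (y : Fin 2 → ℝ) : Fin 3 → ℝ := ![y 0, y 1, 0]

/-!
Both curl equations extend by continuity to the plane `{x₃ = 0}`; subtracting their third
components gives `∂₁(E⁺₂ - E⁻₂) - ∂₂(E⁺₁ - E⁻₁) = iω(B⁺₃ - B⁻₃) + (K⁺₃ - K⁻₃)` there. Since `∂₁`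
and `∂₂` are tangential, they commute with restriction to the plane, which turns the left-hand
side into `∂₁g₂ - ∂₂g₁`.
-/

theorem Set.EqOn.inter_closure_of_isOpen {X Y : Type*} [TopologicalSpace X] [TopologicalSpace Y]
    [T2Space Y] {U S : Set X} {f g : X → Y} (hU : IsOpen U) (hf : ContinuousOn f U)
    (hg : ContinuousOn g U) (h : EqOn f g (U ∩ S)) : EqOn f g (U ∩ closure S) :=
  h.of_subset_closure (hf.mono inter_subset_left) (hg.mono inter_subset_left)
    (inter_subset_inter_right U subset_closure) hU.inter_closure

theorem closure_setOf_lt_apply {ι : Type*} (i : ι) (a : ℝ) :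
    closure {x : ι → ℝ | a < x i} = {x | a ≤ x i} := by
  have h := (isOpenMap_eval (X := fun _ : ι => ℝ) i).preimage_closure_eq_closure_preimage
    (continuous_apply i) (Ioi a)
  rw [closure_Ioi] at h
  exact h.symm

theorem closure_setOf_apply_lt {ι : Type*} (i : ι) (a : ℝ) :
    closure {x : ι → ℝ | x i < a} = {x | x i ≤ a} := by
  have h := (isOpenMap_eval (X := fun _ : ι => ℝ) i).preimage_closure_eq_closure_preimage
    (continuous_apply i) (Iio a)
  rw [closure_Iio] at h
  exact h.symm

theorem pd3_sub {f g : (Fin 3 → ℝ) → ℂ} {x : Fin 3 → ℝ} (hf : DifferentiableAt ℝ f x)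
    (hg : DifferentiableAt ℝ g x) (i : Fin 3) :
    pd3 i (fun y => f y - g y) x = pd3 i f x - pd3 i g x := by
  rw [pd3, fderiv_fun_sub hf hg]
  rfl

theorem continuousOn_pd3 {U : Set (Fin 3 → ℝ)} (hU : IsOpen U) {f : (Fin 3 → ℝ) → ℂ}
    (hf : ContDiffOn ℝ 1 f U) (i : Fin 3) : ContinuousOn (pd3 i f) U :=
  (hf.continuousOn_fderiv_of_isOpen hU le_rfl).clm_apply continuousOn_const

theorem continuousOn_vcurl {U : Set (Fin 3 → ℝ)} (hU : IsOpen U)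
    {F : (Fin 3 → ℝ) → Fin 3 → ℂ} (hF : ContDiffOn ℝ 1 F U) : ContinuousOn (vcurl F) U := by
  have h : ∀ i j, ContinuousOn (pd3 i fun y => F y j) U := fun i j =>
    continuousOn_pd3 hU (contDiffOn_pi.mp hF j) i
  refine continuousOn_pi.mpr fun k => ?_
  fin_cases k <;> exact (h _ _).sub (h _ _)

theorem vcurl_eqOn_inter_closure {U S : Set (Fin 3 → ℝ)} (hU : IsOpen U) (ω : ℂ)
    {F B K : (Fin 3 → ℝ) → Fin 3 → ℂ} (hF : ContDiffOn ℝ 1 F U) (hB : ContinuousOn B U)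
    (hK : ContinuousOn K U) (h : EqOn (vcurl F) (fun x => (I * ω) • B x + K x) (U ∩ S)) :
    EqOn (vcurl F) (fun x => (I * ω) • B x + K x) (U ∩ closure S) :=
  h.inter_closure_of_isOpen hU (continuousOn_vcurl hU hF) (by fun_prop)

noncomputable def embCLM : (Fin 2 → ℝ) →L[ℝ] (Fin 3 → ℝ) :=
  ContinuousLinearMap.pi ![ContinuousLinearMap.proj 0, ContinuousLinearMap.proj 1, 0]

theorem coe_embCLM : ⇑embCLM = emb := by
  funext y i
  fin_cases i <;> simp [embCLM, emb]

theorem embCLM_single (i : Fin 2) : embCLM (Pi.single i 1) = Pi.single i.castSucc 1 := by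
  funext k
  fin_cases i <;> fin_cases k <;> simp [embCLM]

theorem pd2_comp_emb {f : (Fin 3 → ℝ) → ℂ} {y : Fin 2 → ℝ} (hf : DifferentiableAt ℝ f (emb y))
    (i : Fin 2) : pd2 i (fun y => f (emb y)) y = pd3 i.castSucc f (emb y) := by
  have hemb : HasFDerivAt emb embCLM y := coe_embCLM ▸ embCLM.hasFDerivAt
  change fderiv ℝ (f ∘ emb) y _ = _
  rw [(hf.hasFDerivAt.comp y hemb).fderiv, ContinuousLinearMap.comp_apply, embCLM_single,
    pd3]

theorem vcurl_two (F : (Fin 3 → ℝ) → Fin 3 → ℂ) (x : Fin 3 → ℝ) :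
    vcurl F x 2 = pd3 0 (fun y => F y 1) x - pd3 1 (fun y => F y 0) x :=
  rfl

/-- Flat-interface classical form of the compatibility relation
`K_ν^Γ + iωB_ν^Γ = -div_τ E_τ^Γ` of Theorem 4.3: the jumps of the normal components of
`K` and `B` across the interface `{x₃ = 0}` are determined by the jump of the tangential
components of `E`. -/
theorem interface_jump_compatibility
    (U : Set (Fin 3 → ℝ)) (hU : IsOpen U) (ω : ℂ)
    (Ep Bp Kp Em Bm Km : (Fin 3 → ℝ) → Fin 3 → ℂ)
    (hEp : ContDiffOn ℝ 1 Ep U) (hBp : ContinuousOn Bp U) (hKp : ContinuousOn Kp U)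
    (hEm : ContDiffOn ℝ 1 Em U) (hBm : ContinuousOn Bm U) (hKm : ContinuousOn Km U)
    (hp : ∀ x ∈ U, x 2 > 0 → ∀ i, vcurl Ep x i = I * ω * Bp x i + Kp x i)
    (hm : ∀ x ∈ U, x 2 < 0 → ∀ i, vcurl Em x i = I * ω * Bm x i + Km x i)
    (y₀ : Fin 2 → ℝ) (hx : emb y₀ ∈ U) :
    (Kp (emb y₀) 2 - Km (emb y₀) 2) + I * ω * (Bp (emb y₀) 2 - Bm (emb y₀) 2) =
      pd2 0 (fun y => Ep (emb y) 1 - Em (emb y) 1) y₀ -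
      pd2 1 (fun y => Ep (emb y) 0 - Em (emb y) 0) y₀ := by
  have hx₀ : emb y₀ 2 = 0 := rfl
  have hPlus := congrFun (vcurl_eqOn_inter_closure (S := {x | 0 < x 2}) hU ω hEp hBp hKp
    (fun x hx => funext (hp x hx.1 hx.2)) ⟨hx, by rw [closure_setOf_lt_apply]; exact hx₀.ge⟩) 2
  have hMinus := congrFun (vcurl_eqOn_inter_closure (S := {x | x 2 < 0}) hU ω hEm hBm hKm
    (fun x hx => funext (hm x hx.1 hx.2)) ⟨hx, by rw [closure_setOf_apply_lt]; exact hx₀.le⟩) 2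
  simp only [vcurl_two, Pi.add_apply, Pi.smul_apply, smul_eq_mul] at hPlus hMinus
  have hdEp := differentiableAt_pi.mp <|
    (hEp.contDiffAt (hU.mem_nhds hx)).differentiableAt one_ne_zero
  have hdEm := differentiableAt_pi.mp <|
    (hEm.contDiffAt (hU.mem_nhds hx)).differentiableAt one_ne_zero
  rw [pd2_comp_emb (f := fun x => Ep x 1 - Em x 1) ((hdEp 1).sub (hdEm 1)),
    pd2_comp_emb (f := fun x => Ep x 0 - Em x 0) ((hdEp 0).sub (hdEm 0)),
    Fin.castSucc_zero, Fin.castSucc_one, pd3_sub (hdEp 1) (hdEm 1), pd3_sub (hdEp 0) (hdEm 0)]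
  linear_combination hMinus - hPlus
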